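/- The factor i₄(k) = 9 c(k)²·(((k c(k))')² − 1) + (c(k)² − c(2k)²)·(3 + 15 c(k)² + 6 k c(k) c'(k) − k² c'(k)²), with c(k) = sqrt(tanh(k)/k) (T = 0), satisfies i₄(k) > 0 for all sufficiently small k > 0. -/

import Mathlib

open Filter

noncomputable def cww (k : ℝ) : ℝ := Real.sqrt (Real.tanh k / k)

noncomputable def i4 (k : ℝ) : ℝ :=
  9 * cww k ^ 2 * ((deriv (fun k => k * cww k) k) ^ 2 - 1) +
    (cww k ^ 2 - cww (2 * k) ^ 2) *
      (3 + 15 * cww k ^ 2 + 6 * k * cww k * deriv cww k - k ^ 2 * (deriv cww k) ^ 2)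

/-!
Write `s = c(k)² = tanh k / k`, `a = (s - 1) / k² = (tanh k - k) / k³` and let `b` be the same
quotient at `2k`. Since `tanh' = 1 - tanh²`, both `c c'` and `c'²` are rational in `k`, `s`, `a`,
which gives `i₄(k) = k² · i4Reduced k s a b`. As `k → 0` we have `s → 1` and `a, b → -1/3` (the
cubic Taylor coefficient of `tanh`, by L'Hôpital's rule), so `i4Reduced k s a b → -9 + 18 = 9`.
-/

open Real Topology

namespace Real

theorem hasDerivAt_tanh (x : ℝ) : HasDerivAt tanh (1 - tanh x ^ 2) x := by
  have h := (hasDerivAt_sinh x).div (hasDerivAt_cosh x) (cosh_pos x).ne'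
  rw [show sinh / cosh = tanh from funext fun y => (tanh_eq_sinh_div_cosh y).symm] at h
  refine h.congr_deriv ?_
  rw [tanh_eq_sinh_div_cosh]
  field_simp

theorem tanh_pos {x : ℝ} (hx : 0 < x) : 0 < tanh x := by
  rw [tanh_eq_sinh_div_cosh]
  exact div_pos (sinh_pos_iff.2 hx) (cosh_pos x)

theorem tanh_div_self_pos {x : ℝ} (hx : 0 < x) : 0 < tanh x / x := div_pos (tanh_pos hx) hx

theorem tendsto_tanh_div_self : Tendsto (fun x => tanh x / x) (𝓝[≠] 0) (𝓝 1) := by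
  simpa [div_eq_inv_mul] using (hasDerivAt_tanh 0).tendsto_slope_zero

theorem tendsto_tanh_sub_self_div_pow_three :
    Tendsto (fun x => (tanh x - x) / x ^ 3) (𝓝[≠] 0) (𝓝 (-1 / 3)) := by
  have hf (x : ℝ) : HasDerivAt (fun x => tanh x - x) (-tanh x ^ 2) x :=
    ((hasDerivAt_tanh x).sub (hasDerivAt_id' x)).congr_deriv (by ring)
  have hg (x : ℝ) : HasDerivAt (fun x : ℝ => x ^ 3) (3 * x ^ 2) x := by
    simpa using hasDerivAt_pow 3 x
  have hratio : Tendsto (fun x => -tanh x ^ 2 / (3 * x ^ 2)) (𝓝[≠] 0) (𝓝 (-1 / 3)) := by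
    have h := (tendsto_tanh_div_self.pow 2).neg.div_const 3
    rw [one_pow] at h
    refine h.congr' (eventually_mem_nhdsWithin.mono fun x (hx : x ≠ 0) => ?_)
    field_simp
  refine HasDerivAt.lhopital_zero_nhdsNE (Eventually.of_forall hf) (Eventually.of_forall hg)
    (eventually_mem_nhdsWithin.mono fun x (hx : x ≠ 0) => by positivity) ?_ ?_ hratio
  · exact tendsto_nhdsWithin_of_tendsto_nhds (by simpa using (hf 0).continuousAt.tendsto)
  · exact tendsto_nhdsWithin_of_tendsto_nhds (by simpa using (hg 0).continuousAt.tendsto)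

end Real

theorem cww_sq {k : ℝ} (hk : 0 < k) : cww k ^ 2 = tanh k / k :=
  sq_sqrt (tanh_div_self_pos hk).le

theorem hasDerivAt_cww {k : ℝ} (hk : 0 < k) :
    HasDerivAt cww (((1 - tanh k ^ 2) * k - tanh k) / k ^ 2 / (2 * cww k)) k :=
  (((hasDerivAt_tanh k).div (hasDerivAt_id' k) hk.ne').sqrt
    (tanh_div_self_pos hk).ne').congr_deriv (by rw [mul_one]; rfl)

noncomputable def i4Reduced (k s a b : ℝ) : ℝ :=
  -9 * s ^ 3 + 9 / 4 * k ^ 2 * (a + s ^ 2) ^ 2 +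
    (a - 4 * b) * (3 + 15 * s - 3 * k ^ 2 * (a + s ^ 2) - k ^ 4 * (a + s ^ 2) ^ 2 / (4 * s))

theorem i4_eq_sq_mul_i4Reduced {k : ℝ} (hk : 0 < k) :
    i4 k = k ^ 2 * i4Reduced k (tanh k / k) ((tanh k - k) / k ^ 3)
      ((tanh (2 * k) - 2 * k) / (2 * k) ^ 3) := by
  have hc := hasDerivAt_cww hk
  have hkc : HasDerivAt (fun y => y * cww y) _ k := (hasDerivAt_id' k).mul hc
  rw [i4, hkc.deriv, hc.deriv, cww_sq hk, cww_sq (by positivity)]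
  have hc0 : cww k ≠ 0 := (sqrt_pos.2 (tanh_div_self_pos hk)).ne'
  have ht : tanh k = k * cww k ^ 2 := by rw [cww_sq hk]; field_simp
  rw [ht, i4Reduced]
  field_simp
  ring

theorem tendsto_i4Reduced :
    Tendsto (fun k => i4Reduced k (tanh k / k) ((tanh k - k) / k ^ 3)
      ((tanh (2 * k) - 2 * k) / (2 * k) ^ 3)) (𝓝[≠] 0) (𝓝 9) := by
  have hk : Tendsto (fun k : ℝ => k) (𝓝[≠] 0) (𝓝 0) := nhdsWithin_le_nhds
  have h2k : Tendsto (fun k : ℝ => 2 * k) (𝓝[≠] 0) (𝓝[≠] 0) := by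
    simpa using ((hasDerivAt_id' (0 : ℝ)).const_mul 2).tendsto_nhdsNE (by norm_num)
  have hcont : ContinuousAt (fun p : ℝ × ℝ × ℝ × ℝ => i4Reduced p.1 p.2.1 p.2.2.1 p.2.2.2)
      (0, 1, -1 / 3, -1 / 3) := by
    unfold i4Reduced
    fun_prop (disch := norm_num)
  have hvalue : i4Reduced 0 1 (-1 / 3) (-1 / 3) = 9 := by norm_num [i4Reduced]
  have hlim := hcont.tendsto.comp (hk.prodMk_nhds (tendsto_tanh_div_self.prodMk_nhds
    (tendsto_tanh_sub_self_div_pow_three.prodMk_nhds (tendsto_tanh_sub_self_div_pow_three.comp h2k))))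
  rwa [← hvalue]

theorem i4_pos_near_zero : ∀ᶠ k in nhdsWithin (0 : ℝ) (Set.Ioi 0), 0 < i4 k := by
  have hreduced := (tendsto_i4Reduced.mono_left (nhdsGT_le_nhdsNE 0)).eventually_const_lt
    (by norm_num : (0 : ℝ) < 9)
  filter_upwards [hreduced, self_mem_nhdsWithin] with k hk (hk0 : 0 < k)
  rw [i4_eq_sq_mul_i4Reduced hk0]
  positivity
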